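/- arXiv:2302.11221 — 4 statements merged into one kernel-verified Lean document; each statement's English description precedes it below -/
import Mathlib

section
/- For every integer r ≥ 1, the following identity of formal power series in t over ℚ[q] holds: E_xp(q^r t) = E_xp(t) · ∑_{m≥0} (q−1)^m J_{m+r}^{(r)}(q) t^m/m!. Equivalently, the coefficients of the series (1/r!) D^r E_xp(t)/E_xp(t) = ∑_{n≥r} c_{n,r} (−t)^{n−r} satisfy c_{n,r} = (1−q)^{n−r} (q^{C(r,2)}/(r!(n−r)!)) J_n^{(r)}(q) for all n ≥ r. -/
noncomputable section

/-- `[m]_q = 1 + q + ⋯ + q^{m-1}` as a polynomial in `q` (so `[0]_q = 0`). -/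
def qNat (m : ℕ) : Polynomial ℚ := ∑ i ∈ Finset.range m, Polynomial.X ^ i

/-- The polynomials `J_n^{(r)}(q)`: `J_n^{(0)} = δ_{n,0}`, `J_r^{(r)} = 1` for
`r ≥ 1`, and for `n > r ≥ 1` the recurrence
`J_n^{(r)} = ∑_{j=1}^{n−r} [r]_q^j q^{C(j,2)} C(n−r,j) J_{n−r}^{(j)}`.
(For `n < r` we set the unconstrained value `J_n^{(r)} = 0`.) -/
def J (n r : ℕ) : Polynomial ℚ :=
  if hr : r = 0 then (if n = 0 then 1 else 0)
  else if hn : n ≤ r then (if n = r then 1 else 0)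
  else
    ∑ j ∈ Finset.Icc 1 (n - r),
      qNat r ^ j * Polynomial.X ^ j.choose 2 * ((n - r).choose j : Polynomial ℚ) * J (n - r) j
termination_by n
decreasing_by omega

/-- `E_xp(t) = ∑_{m≥0} q^{C(m,2)} t^m / m!`, a formal power series in `t`
with coefficients in `ℚ[q]`. -/
def Exp : PowerSeries (Polynomial ℚ) :=
  PowerSeries.mk fun m => Polynomial.C ((m.factorial : ℚ)⁻¹) * Polynomial.X ^ m.choose 2

/-!
Write `e_k = q^{C(k,2)}/k!` and `a_{r,m} = (q-1)^m J_{m+r}^{(r)}/m!` for the coefficients of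
`E_xp` and of the series on the right. Since `J_m^{(0)} = δ_{m,0}`, for `r ≥ 1` the recurrence
for `J_{m+r}^{(r)}` holds for every `m ≥ 0` once its sum is extended to `j = 0`; multiplied by
`(q-1)^m/m!` and using `[r]_q (q-1) = q^r - 1` it becomes
`a_{r,m} = ∑_{j+i=m} (q^r-1)^j e_j a_{j,i}`. The claim `∑_{l+m=n} e_l a_{r,m} = q^{rn} e_n`
then follows by strong induction on `n`, for all `r` at once: substituting the recurrence and
regrouping the triple sum gives `∑_{j+k=n} (q^r-1)^j e_j q^{jk} e_k`, and
`e_j e_k q^{jk} = C(n,j) e_n` because `C(n,2) = C(j,2) + jk + C(k,2)`; the binomial theorem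
sums `∑ C(n,j) (q^r-1)^j` to `q^{rn}`.
-/

open Polynomial Finset
open scoped Nat

theorem Nat.add_choose_two (a b : ℕ) : (a + b).choose 2 = a.choose 2 + a * b + b.choose 2 := by
  rw [Nat.add_choose_eq, Finset.Nat.sum_antidiagonal_succ, Finset.Nat.sum_antidiagonal_succ]
  simp only [Nat.choose_zero_right, Nat.reduceAdd, one_mul, zero_add, Nat.choose_one_right,
    HasAntidiagonal.antidiagonal_zero, sum_singleton, mul_one]
  ring

theorem Nat.inv_factorial_mul_inv_factorial {K : Type*} [Field K] [CharZero K] (i j : ℕ) :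
    (i ! : K)⁻¹ * (j ! : K)⁻¹ = (i + j).choose i * ((i + j)! : K)⁻¹ := by
  have : ((i + j)! : K) ≠ 0 := Nat.cast_ne_zero.mpr (Nat.factorial_ne_zero _)
  rw [Nat.cast_add_choose]
  field_simp

theorem Finset.Nat.sum_antidiagonal_sum_antidiagonal_left_comm {M : Type*} [AddCommMonoid M]
    (n : ℕ) (f : ℕ → ℕ → ℕ → M) :
    ∑ p ∈ antidiagonal n, ∑ q ∈ antidiagonal p.2, f p.1 q.1 q.2 =
      ∑ p ∈ antidiagonal n, ∑ q ∈ antidiagonal p.2, f q.1 p.1 q.2 := by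
  rw [sum_sigma', sum_sigma']
  refine sum_nbij' (fun x => ⟨(x.2.1, x.1.1 + x.2.2), (x.1.1, x.2.2)⟩)
    (fun x => ⟨(x.2.1, x.1.1 + x.2.2), (x.1.1, x.2.2)⟩) ?_ ?_ ?_ ?_ (fun _ _ => rfl) <;>
  · rintro ⟨⟨a, k⟩, ⟨b, c⟩⟩ h
    simp only [mem_sigma, HasAntidiagonal.mem_antidiagonal, Sigma.mk.injEq, Prod.mk.injEq,
      heq_eq_eq, and_true, true_and] at h ⊢
    omega

theorem qNat_mul_X_sub_one (r : ℕ) : qNat r * (X - 1) = X ^ r - 1 := geom_sum_mul X r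

theorem J_zero_right (n : ℕ) : J n 0 = if n = 0 then 1 else 0 := by
  rw [J]; simp

theorem J_add_self_eq_sum {r : ℕ} (hr : r ≠ 0) (m : ℕ) :
    J (m + r) r = ∑ p ∈ antidiagonal m,
      qNat r ^ p.1 * X ^ p.1.choose 2 * (m.choose p.1 : ℚ[X]) * J m p.1 := by
  rcases Nat.eq_zero_or_pos m with rfl | hm
  · rw [J]; simp [hr, J_zero_right]
  rw [J, dif_neg hr, dif_neg (by omega), Nat.add_sub_cancel,
    Nat.sum_antidiagonal_eq_sum_range_succ_mk, sum_range_succ', J_zero_right, if_neg hm.ne',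
    mul_zero, add_zero, ← Ico_add_one_right_eq_Icc, sum_Ico_eq_sum_range, Nat.add_sub_cancel]
  simp only [add_comm 1]

def jSeries (r : ℕ) : PowerSeries ℚ[X] :=
  PowerSeries.mk fun m => (X - 1) ^ m * J (m + r) r * C ((m ! : ℚ)⁻¹)

theorem coeff_Exp (k : ℕ) : PowerSeries.coeff k Exp = C ((k ! : ℚ)⁻¹) * X ^ k.choose 2 :=
  PowerSeries.coeff_mk _ _

theorem coeff_jSeries (r m : ℕ) :
    PowerSeries.coeff m (jSeries r) = (X - 1) ^ m * J (m + r) r * C ((m ! : ℚ)⁻¹) :=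
  PowerSeries.coeff_mk _ _

theorem jSeries_zero : jSeries 0 = 1 := by
  ext m
  rcases Nat.eq_zero_or_pos m with rfl | hm
  · simp [coeff_jSeries, J_zero_right]
  · simp [coeff_jSeries, J_zero_right, PowerSeries.coeff_one, hm.ne']

theorem coeff_jSeries_eq_sum {r : ℕ} (hr : r ≠ 0) (m : ℕ) :
    PowerSeries.coeff m (jSeries r) = ∑ p ∈ antidiagonal m,
      (X ^ r - 1) ^ p.1 * PowerSeries.coeff p.1 Exp * PowerSeries.coeff p.2 (jSeries p.1) := by
  rw [coeff_jSeries, J_add_self_eq_sum hr, mul_sum, sum_mul]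
  refine sum_congr rfl fun ⟨j, i⟩ h => ?_
  rw [HasAntidiagonal.mem_antidiagonal] at h
  subst h
  have hC := congrArg C (Nat.inv_factorial_mul_inv_factorial (K := ℚ) j i)
  simp only [map_mul, map_natCast] at hC
  simp only [coeff_Exp, coeff_jSeries, ← qNat_mul_X_sub_one, mul_pow, pow_add, add_comm i j]
  linear_combination -(X - 1) ^ j * (X - 1) ^ i * qNat r ^ j * X ^ j.choose 2 * J (j + i) j * hC

theorem coeff_Exp_mul_coeff_Exp (j k : ℕ) :
    PowerSeries.coeff j Exp * PowerSeries.coeff k Exp * X ^ (j * k) =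
      ((j + k).choose j : ℚ[X]) * PowerSeries.coeff (j + k) Exp := by
  have hC := congrArg C (Nat.inv_factorial_mul_inv_factorial (K := ℚ) j k)
  simp only [map_mul, map_natCast] at hC
  rw [coeff_Exp, coeff_Exp, coeff_Exp, Nat.add_choose_two, pow_add, pow_add]
  linear_combination X ^ j.choose 2 * X ^ (j * k) * X ^ k.choose 2 * hC

theorem coeff_Exp_mul_jSeries (n r : ℕ) :
    PowerSeries.coeff n (Exp * jSeries r) = (X ^ r) ^ n * PowerSeries.coeff n Exp := by
  induction n using Nat.strong_induction_on generalizing r with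
  | _ n ih =>
  rcases eq_or_ne r 0 with rfl | hr
  · simp [jSeries_zero]
  have hinner : ∀ p ∈ antidiagonal n, ∑ q ∈ antidiagonal p.2,
      PowerSeries.coeff q.1 Exp * PowerSeries.coeff q.2 (jSeries p.1) =
        (X ^ p.1) ^ p.2 * PowerSeries.coeff p.2 Exp := by
    rintro ⟨j, k⟩ h
    rw [← PowerSeries.coeff_mul]
    rcases eq_or_ne j 0 with rfl | _
    · simp [jSeries_zero]
    · exact ih k (by rw [HasAntidiagonal.mem_antidiagonal] at h; omega) j
  calc PowerSeries.coeff n (Exp * jSeries r)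
      = ∑ p ∈ antidiagonal n, ∑ q ∈ antidiagonal p.2, PowerSeries.coeff p.1 Exp *
          ((X ^ r - 1) ^ q.1 * PowerSeries.coeff q.1 Exp *
            PowerSeries.coeff q.2 (jSeries q.1)) := by
        simp_rw [PowerSeries.coeff_mul, coeff_jSeries_eq_sum hr, mul_sum]
    _ = ∑ p ∈ antidiagonal n, ∑ q ∈ antidiagonal p.2, PowerSeries.coeff q.1 Exp *
          ((X ^ r - 1) ^ p.1 * PowerSeries.coeff p.1 Exp * PowerSeries.coeff q.2 (jSeries p.1)) :=
        Nat.sum_antidiagonal_sum_antidiagonal_left_comm n fun a b c => PowerSeries.coeff a Exp *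
          ((X ^ r - 1) ^ b * PowerSeries.coeff b Exp * PowerSeries.coeff c (jSeries b))
    _ = ∑ p ∈ antidiagonal n, (X ^ r - 1) ^ p.1 * PowerSeries.coeff p.1 Exp *
          ((X ^ p.1) ^ p.2 * PowerSeries.coeff p.2 Exp) := by
        refine sum_congr rfl fun p hp => ?_
        rw [← hinner p hp, mul_sum]
        exact sum_congr rfl fun _ _ => by ring
    _ = ∑ p ∈ antidiagonal n, n.choose p.1 • ((X ^ r - 1) ^ p.1 * 1 ^ p.2) *
          PowerSeries.coeff n Exp := by
        refine sum_congr rfl fun ⟨j, k⟩ h => ?_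
        rw [HasAntidiagonal.mem_antidiagonal] at h
        subst h
        rw [one_pow, mul_one, nsmul_eq_mul, ← pow_mul]
        linear_combination (X ^ r - 1) ^ j * coeff_Exp_mul_coeff_Exp j k
    _ = (X ^ r) ^ n * PowerSeries.coeff n Exp := by
        rw [← sum_mul, ← (Commute.all _ _).add_pow', sub_add_cancel]

theorem rescale_Exp_eq_Exp_mul_J_genfun_general (r : ℕ) :
    PowerSeries.rescale (Polynomial.X ^ r) Exp =
      Exp * PowerSeries.mk (fun m =>
        (Polynomial.X - 1) ^ m * J (m + r) r * Polynomial.C ((m.factorial : ℚ)⁻¹)) :=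
  PowerSeries.ext fun n => by rw [PowerSeries.coeff_rescale, ← coeff_Exp_mul_jSeries]; rfl

/-- for every `r ≥ 1`,
`E_xp(q^r t) = E_xp(t) · ∑_{m≥0} (q−1)^m J_{m+r}^{(r)}(q) t^m/m!`. -/
theorem rescale_Exp_eq_Exp_mul_J_genfun (r : ℕ) (hr : 1 ≤ r) :
    PowerSeries.rescale (Polynomial.X ^ r) Exp =
      Exp * PowerSeries.mk (fun m =>
        (Polynomial.X - 1) ^ m * J (m + r) r * Polynomial.C ((m.factorial : ℚ)⁻¹)) :=
  rescale_Exp_eq_Exp_mul_J_genfun_general r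
end
end

section
/- For all integers n ≥ r ≥ 1, the polynomial J_n^{(r)}(q) is monic of degree C(n−1,2) − C(r−1,2), and its constant term equals (n−r)!. -/
noncomputable section

open Polynomial

lemma qNat_coeff (m k : ℕ) : (qNat m).coeff k = if k < m then 1 else 0 := by
  simp only [qNat, finset_sum_coeff, coeff_X_pow]
  simp [Finset.sum_ite_eq, Finset.mem_range]

lemma qNat_natDegree {r : ℕ} (hr : 1 ≤ r) : (qNat r).natDegree = r - 1 := by
  have h1 : (qNat r).coeff (r-1) = 1 := by rw [qNat_coeff, if_pos (by omega)]
  have h2 : (qNat r).natDegree ≤ r - 1 := by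
    rw [Polynomial.natDegree_le_iff_coeff_eq_zero]
    intro m hm; rw [qNat_coeff]; simp; omega
  have h3 : r - 1 ≤ (qNat r).natDegree := Polynomial.le_natDegree_of_ne_zero (by rw [h1]; norm_num)
  omega

lemma qNat_monic {r : ℕ} (hr : 1 ≤ r) : (qNat r).Monic := by
  unfold Polynomial.Monic Polynomial.leadingCoeff
  rw [qNat_natDegree hr, qNat_coeff]
  rw [if_pos (by omega)]

lemma qNat_constantCoeff {r : ℕ} (hr : 1 ≤ r) : (qNat r).coeff 0 = 1 := by
  rw [qNat_coeff, if_pos (by omega)]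

lemma two_choose_two (k : ℕ) : 2 * k.choose 2 + k = k * k := by
  induction k with
  | zero => rfl
  | succ k ih =>
    rw [Nat.choose_succ_succ, Nat.choose_one_right]
    nlinarith [ih]

lemma lemA (m r j : ℕ) (hr : 1 ≤ r) (hj : 1 ≤ j) (hjm : j ≤ m) :
    j * (r-1) + j.choose 2 + ((m-1).choose 2 - (j-1).choose 2) = j * r - 1 + (m-1).choose 2 := by
  obtain ⟨i, rfl⟩ : ∃ i, j = i + 1 := ⟨j - 1, by omega⟩
  obtain ⟨s, rfl⟩ : ∃ s, r = s + 1 := ⟨r - 1, by omega⟩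
  have h1 : (i+1).choose 2 = i + i.choose 2 := by
    rw [Nat.choose_succ_succ, Nat.choose_one_right]
  have h2 : i.choose 2 ≤ (m-1).choose 2 := Nat.choose_le_choose 2 (by omega)
  have h3 : (i+1) * (s+1) = (i+1)*s + (i+1) := by ring
  simp only [Nat.add_sub_cancel]
  rw [h1, h3]
  omega

lemma lemB (m r : ℕ) (hr : 1 ≤ r) (hm : 1 ≤ m) :
    (m + r - 1).choose 2 - (r-1).choose 2 = m*r - 1 + (m-1).choose 2 := by
  obtain ⟨a, rfl⟩ : ∃ a, m = a + 1 := ⟨m - 1, by omega⟩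
  obtain ⟨b, rfl⟩ : ∃ b, r = b + 1 := ⟨r - 1, by omega⟩
  simp only [Nat.add_sub_cancel, show a + 1 + (b + 1) - 1 = a + b + 1 from by omega]
  have t1 := two_choose_two a
  have t2 := two_choose_two b
  have t3 := two_choose_two (a+b+1)
  have key : (a+b+1).choose 2 + 1 = b.choose 2 + (a+1)*(b+1) + a.choose 2 := by nlinarith [t1, t2, t3]
  have hp : 1 ≤ (a+1)*(b+1) := Nat.one_le_iff_ne_zero.mpr (by positivity)
  omega

lemma J_self {m : ℕ} (hm : 1 ≤ m) : J m m = 1 := by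
  rw [J, dif_neg (by omega), dif_pos le_rfl, if_pos rfl]


/-- for `n ≥ r ≥ 1`, `J_n^{(r)}` is monic of degree
`C(n−1,2) − C(r−1,2)` and its constant term is `(n−r)!`. -/
theorem J_monic_natDegree_constantCoeff (n r : ℕ) (hr : 1 ≤ r) (hrn : r ≤ n) :
    (J n r).Monic ∧
      (J n r).natDegree = (n - 1).choose 2 - (r - 1).choose 2 ∧
      (J n r).coeff 0 = ((n - r).factorial : ℚ) := by
  induction n using Nat.strong_induction_on generalizing r with
  | _ n IH =>
  rcases eq_or_lt_of_le hrn with heq | hlt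
  · subst heq
    rw [J_self hr]
    refine ⟨monic_one, by simp, by simp⟩
  · have hm1 : 1 ≤ n - r := by omega
    have hmn : n - r < n := by omega
    rw [J, dif_neg (by omega), dif_neg (by omega)]
    set m := n - r with hmdef
    -- nonvanishing facts
    have hq0 : qNat r ≠ 0 := (qNat_monic hr).ne_zero
    have hJfact : ∀ j, 1 ≤ j → j ≤ m → (J m j).Monic ∧
        (J m j).natDegree = (m - 1).choose 2 - (j - 1).choose 2 ∧
        (J m j).coeff 0 = ((m - j).factorial : ℚ) := fun j hj1 hjm => IH m hmn j hj1 hjm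
    -- degree of each term
    have hdeg : ∀ j, 1 ≤ j → j ≤ m →
        (qNat r ^ j * X ^ j.choose 2 * (m.choose j : ℚ[X]) * J m j).natDegree
          = j * r - 1 + (m-1).choose 2 := by
      intro j hj1 hjm
      have hJm := hJfact j hj1 hjm
      have hc0 : (m.choose j : ℚ[X]) ≠ 0 := by
        simpa [Nat.cast_ne_zero] using (Nat.choose_pos hjm).ne'
      have hxp : (X : ℚ[X]) ^ j.choose 2 ≠ 0 := pow_ne_zero _ X_ne_zero
      have hpw : qNat r ^ j ≠ 0 := pow_ne_zero _ hq0
      rw [natDegree_mul (mul_ne_zero (mul_ne_zero hpw hxp) hc0) hJm.1.ne_zero,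
          natDegree_mul (mul_ne_zero hpw hxp) hc0,
          natDegree_mul hpw hxp,
          (qNat_monic hr).natDegree_pow, qNat_natDegree hr, natDegree_X_pow,
          natDegree_natCast, hJm.2.1]
      rw [add_zero]
      exact lemA m r j hr hj1 hjm
    -- constant coefficient
    have hc : (∑ j ∈ Finset.Icc 1 m,
        qNat r ^ j * X ^ j.choose 2 * (m.choose j : ℚ[X]) * J m j).coeff 0
        = (m.factorial : ℚ) := by
      rw [finset_sum_coeff, Finset.sum_eq_single 1]
      · have h1 := (hJfact 1 le_rfl hm1).2.2
        rw [mul_coeff_zero, mul_coeff_zero, mul_coeff_zero, h1, pow_one,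
            qNat_constantCoeff hr]
        norm_num
        rw [← Nat.cast_mul, Nat.mul_factorial_pred (by omega)]
      · intro j hj hne
        rw [Finset.mem_Icc] at hj
        have h2 : 0 < j.choose 2 := Nat.choose_pos (by omega)
        rw [mul_coeff_zero, mul_coeff_zero, mul_coeff_zero, coeff_X_pow,
            if_neg (by omega)]
        ring
      · intro h
        exact absurd (Finset.mem_Icc.mpr ⟨le_rfl, hm1⟩) h
    -- split off the top term
    have hsplit : Finset.Icc 1 m = insert m (Finset.Icc 1 (m-1)) := by
      ext x; simp only [Finset.mem_Icc, Finset.mem_insert]; omega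
    have hnotmem : m ∉ Finset.Icc 1 (m-1) := by
      simp only [Finset.mem_Icc]; omega
    have htop : qNat r ^ m * X ^ m.choose 2 * (m.choose m : ℚ[X]) * J m m
        = qNat r ^ m * X ^ m.choose 2 := by
      rw [J_self hm1, Nat.choose_self, Nat.cast_one, mul_one, mul_one]
    have hMonicTop : (qNat r ^ m * X ^ m.choose 2).Monic :=
      ((qNat_monic hr).pow _).mul (monic_X_pow _)
    have hdegTop : (qNat r ^ m * X ^ m.choose 2).natDegree
        = (n-1).choose 2 - (r-1).choose 2 := by
      have := hdeg m hm1 le_rfl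
      rw [htop] at this
      rw [this, show n - 1 = m + r - 1 from by omega, lemB m r hr hm1]
    have hrest : (∑ j ∈ Finset.Icc 1 (m-1),
        qNat r ^ j * X ^ j.choose 2 * (m.choose j : ℚ[X]) * J m j).degree
        < (qNat r ^ m * X ^ m.choose 2).degree := by
      refine lt_of_le_of_lt (degree_sum_le _ _) ?_
      rw [degree_eq_natDegree hMonicTop.ne_zero, Finset.sup_lt_iff (by exact_mod_cast WithBot.bot_lt_coe _)]
      intro j hj
      rw [Finset.mem_Icc] at hj
      have hj1 : 1 ≤ j := hj.1
      have hjm : j ≤ m := by omega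
      have hne : qNat r ^ j * X ^ j.choose 2 * (m.choose j : ℚ[X]) * J m j ≠ 0 := by
        refine mul_ne_zero (mul_ne_zero (mul_ne_zero (pow_ne_zero _ hq0)
          (pow_ne_zero _ X_ne_zero)) ?_) (hJfact j hj1 hjm).1.ne_zero
        simpa [Nat.cast_ne_zero] using (Nat.choose_pos hjm).ne'
      rw [degree_eq_natDegree hne, Nat.cast_lt, hdeg j hj1 hjm]
      have hd := hdeg m hm1 le_rfl
      rw [htop] at hd
      rw [hd]
      have hlt2 : j * r < m * r := Nat.mul_lt_mul_of_lt_of_le (by omega) le_rfl (by omega)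
      have hge : 1 ≤ j * r := Nat.one_le_iff_ne_zero.mpr (by positivity)
      omega
    rw [hsplit, Finset.sum_insert hnotmem, htop]
    refine ⟨hMonicTop.add_of_left hrest, ?_, ?_⟩
    · rw [natDegree_add_eq_left_of_degree_lt hrest, hdegTop]
    · have := hc
      rw [hsplit, Finset.sum_insert hnotmem, htop] at this
      rw [this]


end
end

section
/- For all integers n−1 ≥ r ≥ 1, the reciprocal polynomials satisfy the linear recurrence J̄_n^{(r)}(q) = ∑_{j=1}^{n−r} [r]_q^j · q^{r(n−r−j)} · C(n−r,j) · J̄_{n−r}^{(j)}(q), whose coefficients lie in ℕ[q]. -/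
noncomputable section

/-- The reciprocal polynomial `J̄_n^{(r)}(q) = q^{C(n−1,2)−C(r−1,2)} J_n^{(r)}(1/q)`,
i.e. the reflection of `J_n^{(r)}` at degree `C(n−1,2) − C(r−1,2)`. -/
def Jbar (n r : ℕ) : Polynomial ℚ :=
  Polynomial.reflect ((n - 1).choose 2 - (r - 1).choose 2) (J n r)

/-!
Reflection is additive, and for factors of natural degree at most `a` and `b` it is
multiplicative at degree `a + b`. The reflection degree of `J_n^{(r)}` splits along each summand
`[r]^j q^{C(j,2)} C(n−r,j) J_{n−r}^{(j)}` of its recurrence as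
`j(r−1) + (r(n−r−j) + C(j,2)) + (C(n−r−1,2) − C(j−1,2))`: the palindromic `[r]^j` is fixed by
reflection at `j(r−1)`, `q^{C(j,2)}` becomes `q^{r(n−r−j)}`, and `J_{n−r}^{(j)}` becomes
`J̄_{n−r}^{(j)}` because, by induction on `n`, `deg J_n^{(r)} ≤ C(n−1,2) − C(r−1,2)`.
-/

open Polynomial

theorem Polynomial.reflect_sum {R ι : Type*} [Semiring R] (s : Finset ι) (N : ℕ) (f : ι → R[X]) :
    reflect N (∑ i ∈ s, f i) = ∑ i ∈ s, reflect N (f i) :=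
  map_sum (⟨⟨reflect N, reflect_zero⟩, fun f g => reflect_add f g N⟩ : R[X] →+ R[X]) f s

theorem Polynomial.reflect_pow {R : Type*} [CommSemiring R] {p : R[X]} {N : ℕ}
    (hp : p.natDegree ≤ N) (j : ℕ) : reflect (j * N) (p ^ j) = reflect N p ^ j := by
  induction j with
  | zero => simp [reflect_one]
  | succ j ih =>
    rw [pow_succ, pow_succ, add_one_mul, reflect_mul _ _ (natDegree_pow_le_of_le j hp) hp, ih]

theorem natDegree_qNat_le (r : ℕ) : (qNat r).natDegree ≤ r - 1 :=
  natDegree_sum_le_of_forall_le _ _ fun i hi => by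
    simpa using Nat.le_sub_one_of_lt (Finset.mem_range.mp hi)

theorem reflect_qNat (r : ℕ) : reflect (r - 1) (qNat r) = qNat r := by
  rw [qNat, reflect_sum, ← Finset.sum_range_reflect]
  refine Finset.sum_congr rfl fun i hi => ?_
  have hir := Finset.mem_range.mp hi
  rw [reflect_monomial, revAt_le (by omega)]
  congr 1
  omega

theorem reflect_qNat_pow (r j : ℕ) : reflect (j * (r - 1)) (qNat r ^ j) = qNat r ^ j := by
  rw [reflect_pow (natDegree_qNat_le r), reflect_qNat]

theorem choose_two_add (a b : ℕ) : (a + b).choose 2 = a.choose 2 + b.choose 2 + a * b := by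
  induction b with
  | zero => simp
  | succ b ih =>
    rw [← add_assoc, Nat.choose_succ_succ', ih, Nat.choose_succ_succ' b]
    simp only [Nat.choose_one_right]
    ring

theorem reflectionDegree_split {n r j : ℕ} (hr : 1 ≤ r) (hj : 1 ≤ j) (hjn : j ≤ n - r) :
    (n - 1).choose 2 - (r - 1).choose 2 =
      j * (r - 1) + (r * (n - r - j) + j.choose 2) + ((n - r - 1).choose 2 - (j - 1).choose 2) := by
  obtain ⟨s, rfl⟩ := Nat.exists_eq_add_of_le' hr
  obtain ⟨i, rfl⟩ := Nat.exists_eq_add_of_le' hj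
  obtain ⟨k, rfl⟩ : ∃ k, n = i + k + 1 + s + 1 := ⟨n - (s + 1) - (i + 1), by omega⟩
  rw [show i + k + 1 + s + 1 - 1 = (i + k + 1) + s by omega,
    show i + k + 1 + s + 1 - (s + 1) - 1 = i + k by omega,
    show i + k + 1 + s + 1 - (s + 1) - (i + 1) = k by omega, Nat.add_sub_cancel, Nat.add_sub_cancel,
    choose_two_add, Nat.choose_succ_succ' (i + k), Nat.choose_succ_succ' i, choose_two_add]
  simp only [Nat.choose_one_right]
  ring_nf
  omega

theorem J_self_s11 {r : ℕ} (hr : 1 ≤ r) : J r r = 1 := by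
  rw [J, dif_neg (by omega), dif_pos le_rfl, if_pos rfl]

theorem J_of_lt {n r : ℕ} (hr : 1 ≤ r) (hrn : r < n) :
    J n r = ∑ j ∈ Finset.Icc 1 (n - r),
      qNat r ^ j * X ^ j.choose 2 * ((n - r).choose j : ℚ[X]) * J (n - r) j := by
  rw [J, dif_neg (by omega), dif_neg (by omega)]

theorem natDegree_J_coeff_le (r j k c : ℕ) :
    (qNat r ^ j * X ^ j.choose 2 * (c : ℚ[X])).natDegree ≤ j * (r - 1) + (k + j.choose 2) := by
  rw [← add_zero (j * (r - 1) + _)]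
  refine natDegree_mul_le_of_le (natDegree_mul_le_of_le ?_ ?_) (natDegree_natCast c).le
  · exact natDegree_pow_le_of_le j (natDegree_qNat_le r)
  · exact (natDegree_X_pow_le _).trans (Nat.le_add_left _ _)

theorem reflect_J_coeff (r j k c : ℕ) :
    reflect (j * (r - 1) + (k + j.choose 2)) (qNat r ^ j * X ^ j.choose 2 * (c : ℚ[X])) =
      qNat r ^ j * X ^ k * (c : ℚ[X]) := by
  have hX : (X ^ j.choose 2 : ℚ[X]).natDegree ≤ k + j.choose 2 :=
    (natDegree_X_pow_le _).trans (Nat.le_add_left _ _)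
  rw [← C_eq_natCast, mul_comm _ (C _), reflect_C_mul,
    reflect_mul _ _ (natDegree_pow_le_of_le j (natDegree_qNat_le r)) hX, reflect_qNat_pow,
    reflect_monomial, revAt_le (Nat.le_add_left _ _), Nat.add_sub_cancel, mul_comm (C _)]

theorem natDegree_J_le {n r : ℕ} (hr : 1 ≤ r) (hrn : r ≤ n) :
    (J n r).natDegree ≤ (n - 1).choose 2 - (r - 1).choose 2 := by
  induction n using Nat.strong_induction_on generalizing r with
  | _ n ih =>
    obtain rfl | hlt := hrn.eq_or_lt
    · simp [J_self_s11 hr]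
    rw [J_of_lt hr hlt]
    refine natDegree_sum_le_of_forall_le _ _ fun j hj => ?_
    obtain ⟨hj1, hjn⟩ := Finset.mem_Icc.mp hj
    rw [reflectionDegree_split hr hj1 hjn]
    exact natDegree_mul_le_of_le (natDegree_J_coeff_le r j _ _) (ih _ (by omega) hj1 hjn)

/-- for `n − 1 ≥ r ≥ 1`, the reciprocal polynomials satisfy
`J̄_n^{(r)} = ∑_{j=1}^{n−r} [r]_q^j q^{r(n−r−j)} C(n−r,j) J̄_{n−r}^{(j)}`
(whose coefficients lie in `ℕ[q]`). -/
theorem Jbar_recurrence (n r : ℕ) (hr : 1 ≤ r) (hrn : r + 1 ≤ n) :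
    Jbar n r =
      ∑ j ∈ Finset.Icc 1 (n - r),
        qNat r ^ j * Polynomial.X ^ (r * (n - r - j)) * ((n - r).choose j : Polynomial ℚ) *
          Jbar (n - r) j := by
  rw [Jbar, J_of_lt hr hrn, reflect_sum]
  refine Finset.sum_congr rfl fun j hj => ?_
  obtain ⟨hj1, hjn⟩ := Finset.mem_Icc.mp hj
  rw [reflectionDegree_split hr hj1 hjn,
    reflect_mul _ _ (natDegree_J_coeff_le r j _ _) (natDegree_J_le hj1 hjn), reflect_J_coeff]
  rfl

end
end

section
/- For all integers n−1 ≥ r ≥ 1, J_n^{(r)}(q) = ∑_{k=1}^{n−r} ∑_{(u_1,…,u_k)} [r]_q^{u_1} [u_1]_q^{u_2} ⋯ [u_{k−1}]_q^{u_k} · q^{C(u_1,2)+⋯+C(u_k,2)} · (n−r)!/(u_1! u_2! ⋯ u_k!), where the inner sum is over all k-tuples of strictly positive integers (u_1,…,u_k) with u_1+⋯+u_k = n−r (compositions of n−r into k parts). -/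
noncomputable section

/-- The compositions of `m` into `k` strictly positive parts `(u_1, …, u_k)`
(as functions `Fin k → ℕ`, `u i` being `u_{i+1}`). -/
def compositions (k m : ℕ) : Finset (Fin k → ℕ) :=
  (Finset.Nat.antidiagonalTuple k m).filter fun u => ∀ i, 1 ≤ u i

/-- The chain `[r]_q^{u_1} [u_1]_q^{u_2} ⋯ [u_{k−1}]_q^{u_k}`. -/
def chainQ (r k : ℕ) (u : Fin k → ℕ) : Polynomial ℚ :=
  ∏ i : Fin k,
    qNat (if (i : ℕ) = 0 then r
      else u ⟨(i : ℕ) - 1, lt_of_le_of_lt (Nat.sub_le _ _) i.isLt⟩) ^ u i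

open Finset Polynomial

lemma mem_compositions {k m : ℕ} {u : Fin k → ℕ} :
    u ∈ compositions k m ↔ (∑ i, u i) = m ∧ ∀ i, 1 ≤ u i := by
  simp [compositions, Finset.Nat.mem_antidiagonalTuple]

lemma compositions_eq_empty {k m : ℕ} (h : m < k) : compositions k m = ∅ := by
  ext u
  simp only [mem_compositions, Finset.notMem_empty, iff_false, not_and]
  intro hs hpos
  have : (k : ℕ) ≤ ∑ i, u i := by
    calc (k : ℕ) = ∑ _i : Fin k, 1 := by simp
    _ ≤ ∑ i, u i := Finset.sum_le_sum fun i _ => hpos i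
  omega

lemma compositions_one {m : ℕ} (hm : 1 ≤ m) :
    compositions 1 m = {fun _ => m} := by
  ext u
  simp only [mem_compositions, Finset.mem_singleton]
  constructor
  · rintro ⟨hs, -⟩
    funext i
    have : i = 0 := Subsingleton.elim _ _
    subst this
    simpa using hs
  · rintro rfl
    refine ⟨by simp, fun i => by simpa using hm⟩

lemma sum_compositions_succ {M : Type*} [AddCommMonoid M] (k m : ℕ) (hk : 1 ≤ k)
    (f : (Fin (k+1) → ℕ) → M) :
    ∑ u ∈ compositions (k+1) m, f u
      = ∑ j ∈ Finset.Icc 1 (m-1), ∑ v ∈ compositions k (m-j), f (Fin.cons j v) := by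
  rw [Finset.sum_sigma']
  refine Finset.sum_nbij' (i := fun u => ⟨u 0, Fin.tail u⟩)
    (j := fun p => Fin.cons p.1 p.2) ?_ ?_ ?_ ?_ ?_
  · intro u hu
    rw [mem_compositions] at hu
    obtain ⟨hs, hpos⟩ := hu
    rw [Fin.sum_univ_succ] at hs
    have htk : (k : ℕ) ≤ ∑ i, Fin.tail u i := by
      calc (k : ℕ) = ∑ _i : Fin k, 1 := by simp
      _ ≤ _ := Finset.sum_le_sum fun i _ => hpos i.succ
    refine Finset.mem_sigma.mpr ⟨?_, ?_⟩
    · rw [Finset.mem_Icc]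
      refine ⟨hpos 0, ?_⟩
      show u 0 ≤ m - 1
      have ht0 : ∑ i : Fin k, Fin.tail u i = ∑ i : Fin k, u i.succ :=
        Finset.sum_congr rfl fun i _ => rfl
      omega
    · rw [mem_compositions]
      refine ⟨?_, fun i => hpos i.succ⟩
      show ∑ i, Fin.tail u i = m - u 0
      have ht : ∑ i, Fin.tail u i = ∑ i : Fin k, u i.succ :=
        Finset.sum_congr rfl fun i _ => rfl
      omega
  · rintro ⟨j, v⟩ hp
    rw [Finset.mem_sigma, Finset.mem_Icc, mem_compositions] at hp
    obtain ⟨⟨hj1, hj2⟩, hvs, hvpos⟩ := hp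
    have hvs' : ∑ i, v i = m - j := hvs
    have hj1' : 1 ≤ j := hj1
    have hj2' : j ≤ m - 1 := hj2
    rw [mem_compositions]
    constructor
    · show (∑ i : Fin (k+1), (Fin.cons j v : Fin (k+1) → ℕ) i) = m
      rw [Fin.sum_univ_succ]
      have hc0 : (Fin.cons j v : Fin (k+1) → ℕ) 0 = j := rfl
      have hcs : ∑ i : Fin k, (Fin.cons j v : Fin (k+1) → ℕ) i.succ = ∑ i, v i :=
        Finset.sum_congr rfl fun i _ => rfl
      rw [hc0, hcs]
      omega
    · intro i
      refine Fin.cases ?_ ?_ i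
      · simpa using hj1
      · intro i; simpa using hvpos i
  · intro u hu; exact Fin.cons_self_tail u
  · rintro ⟨j, v⟩ hp
    simp [Fin.tail_cons]
  · intro u hu; rw [Fin.cons_self_tail]

lemma chainQ_cons_factor (r j k : ℕ) (v : Fin k → ℕ) (i : Fin k) :
    qNat (if ((i.succ : Fin (k+1)) : ℕ) = 0 then r
      else (Fin.cons j v : Fin (k+1) → ℕ) ⟨((i.succ : Fin (k+1)) : ℕ) - 1,
        lt_of_le_of_lt (Nat.sub_le _ _) (i.succ : Fin (k+1)).isLt⟩) ^ ((Fin.cons j v : Fin (k+1) → ℕ) i.succ)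
    = qNat (if (i : ℕ) = 0 then j
      else v ⟨(i : ℕ) - 1, lt_of_le_of_lt (Nat.sub_le _ _) i.isLt⟩) ^ v i := by
  rcases i with ⟨iv, hiv⟩
  rw [Fin.cons_succ]
  congr 1
  rw [if_neg (show ¬ ((Fin.succ (⟨iv, hiv⟩ : Fin k) : Fin (k+1)) : ℕ) = 0 by simp)]
  have hidx : (⟨((Fin.succ (⟨iv, hiv⟩ : Fin k) : Fin (k+1)) : ℕ) - 1,
      lt_of_le_of_lt (Nat.sub_le _ _) (Fin.succ (⟨iv, hiv⟩ : Fin k)).isLt⟩ : Fin (k+1))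
      = ⟨iv, Nat.lt_succ_of_lt hiv⟩ := by
    apply Fin.ext; simp
  rw [hidx]
  rcases Nat.eq_zero_or_pos iv with h0 | hpos
  · subst h0
    rw [if_pos rfl]
    have h00 : (⟨0, Nat.lt_succ_of_lt hiv⟩ : Fin (k+1)) = 0 := rfl
    rw [h00, Fin.cons_zero]
  · obtain ⟨t, rfl⟩ : ∃ t, iv = t + 1 := ⟨iv - 1, by omega⟩
    rw [if_neg (show ¬ (t + 1 = 0) by omega)]
    have hst : (⟨t + 1, Nat.lt_succ_of_lt hiv⟩ : Fin (k+1))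
        = Fin.succ ⟨t, by omega⟩ := by apply Fin.ext; rfl
    rw [hst, Fin.cons_succ]
    congr 1

lemma chainQ_cons (r j k : ℕ) (v : Fin k → ℕ) :
    chainQ r (k+1) (Fin.cons j v) = qNat r ^ j * chainQ j k v := by
  unfold chainQ
  rw [Fin.prod_univ_succ]
  have hfirst : qNat (if ((0 : Fin (k+1)) : ℕ) = 0 then r
      else (Fin.cons j v : Fin (k+1) → ℕ) ⟨((0 : Fin (k+1)) : ℕ) - 1,
        lt_of_le_of_lt (Nat.sub_le _ _) (0 : Fin (k+1)).isLt⟩) ^ ((Fin.cons j v : Fin (k+1) → ℕ) 0)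
      = qNat r ^ j := by simp
  rw [hfirst]
  congr 1
  exact Finset.prod_congr rfl fun i _ => chainQ_cons_factor r j k v i

lemma multinomial_cons_fin (j k : ℕ) (v : Fin k → ℕ) :
    Nat.multinomial Finset.univ (Fin.cons j v)
      = (j + ∑ i, v i).choose j * Nat.multinomial Finset.univ v := by
  have h1 := Nat.multinomial_spec (Finset.univ : Finset (Fin (k+1))) (Fin.cons j v)
  have h2 := Nat.multinomial_spec (Finset.univ : Finset (Fin k)) v
  rw [Fin.prod_univ_succ, Fin.sum_univ_succ] at h1
  simp only [Fin.cons_zero, Fin.cons_succ] at h1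
  have hch := Nat.choose_mul_factorial_mul_factorial (Nat.le_add_right j (∑ i, v i))
  rw [Nat.add_sub_cancel_left] at hch
  have hpos : 0 < Nat.factorial j * ∏ i : Fin k, Nat.factorial (v i) :=
    Nat.mul_pos (Nat.factorial_pos j) (Finset.prod_pos fun i _ => Nat.factorial_pos _)
  apply Nat.eq_of_mul_eq_mul_left hpos
  calc (Nat.factorial j * ∏ i : Fin k, Nat.factorial (v i)) * Nat.multinomial Finset.univ (Fin.cons j v)
      = Nat.factorial (j + ∑ i, v i) := h1
    _ = (j + ∑ i, v i).choose j * Nat.factorial j * Nat.factorial (∑ i, v i) := hch.symm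
    _ = (Nat.factorial j * ∏ i : Fin k, Nat.factorial (v i)) * ((j + ∑ i, v i).choose j * Nat.multinomial Finset.univ v) := by
        rw [← h2]; ring

def Fexp (r m : ℕ) : Polynomial ℚ :=
  ∑ k ∈ Finset.Icc 1 m, ∑ u ∈ compositions k m,
    chainQ r k u * Polynomial.X ^ (∑ i, (u i).choose 2) *
      (Nat.multinomial Finset.univ u : Polynomial ℚ)

lemma cons_choose_sum (j k : ℕ) (v : Fin k → ℕ) :
    (∑ i : Fin (k+1), ((Fin.cons j v : Fin (k+1) → ℕ) i).choose 2)
      = j.choose 2 + ∑ i, (v i).choose 2 := by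
  rw [Fin.sum_univ_succ]
  have hc0 : (Fin.cons j v : Fin (k+1) → ℕ) 0 = j := rfl
  have hcs : ∑ i : Fin k, ((Fin.cons j v : Fin (k+1) → ℕ) i.succ).choose 2
      = ∑ i, (v i).choose 2 := Finset.sum_congr rfl fun i _ => rfl
  rw [hc0, hcs]

lemma Fexp_key (r m : ℕ) (hm : 1 ≤ m) :
    Fexp r m = qNat r ^ m * Polynomial.X ^ m.choose 2
      + ∑ j ∈ Finset.Icc 1 (m-1),
          qNat r ^ j * Polynomial.X ^ j.choose 2 * (m.choose j : Polynomial ℚ) * Fexp j (m - j) := by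
  have hsplit : Finset.Icc 1 m = insert 1 (Finset.Icc 2 m) := by
    ext x; simp only [Finset.mem_Icc, Finset.mem_insert]; omega
  rw [Fexp, hsplit, Finset.sum_insert (by simp [Finset.mem_Icc])]
  congr 1
  · rw [compositions_one hm, Finset.sum_singleton]
    have h1 : chainQ r 1 (fun _ => m) = qNat r ^ m := by
      unfold chainQ
      rw [Fin.prod_univ_one]
      norm_num
    have h2 : (∑ i : Fin 1, ((fun _ : Fin 1 => m) i).choose 2) = m.choose 2 := by simp
    have h3 : Nat.multinomial (Finset.univ : Finset (Fin 1)) (fun _ => m) = 1 := by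
      rw [show (Finset.univ : Finset (Fin 1)) = {0} from rfl]
      exact Nat.multinomial_singleton 0 _
    rw [h1, h2, h3]
    simp
  · have hmap : (Finset.Icc 1 (m-1)).map (addRightEmbedding 1) = Finset.Icc 2 m := by
      rw [Finset.map_add_right_Icc]
      congr 1
      omega
    rw [← hmap, Finset.sum_map]
    rw [show (∑ k ∈ Finset.Icc 1 (m-1), ∑ u ∈ compositions (addRightEmbedding 1 k) m,
        chainQ r (addRightEmbedding 1 k) u * Polynomial.X ^ (∑ i, (u i).choose 2) *
          (Nat.multinomial Finset.univ u : Polynomial ℚ))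
      = ∑ k ∈ Finset.Icc 1 (m-1), ∑ j ∈ Finset.Icc 1 (m-1), ∑ v ∈ compositions k (m-j),
          chainQ r (k+1) (Fin.cons j v) *
            Polynomial.X ^ (∑ i, ((Fin.cons j v : Fin (k+1) → ℕ) i).choose 2) *
            (Nat.multinomial Finset.univ (Fin.cons j v) : Polynomial ℚ) from
      Finset.sum_congr rfl fun k hk =>
        sum_compositions_succ k m (Finset.mem_Icc.mp hk).1 _]
    rw [Finset.sum_comm]
    refine Finset.sum_congr rfl fun j hj => ?_
    rw [Finset.mem_Icc] at hj
    have step1 : ∀ k ∈ Finset.Icc 1 (m-1), ∑ v ∈ compositions k (m-j),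
        chainQ r (k+1) (Fin.cons j v) *
          Polynomial.X ^ (∑ i, ((Fin.cons j v : Fin (k+1) → ℕ) i).choose 2) *
          (Nat.multinomial Finset.univ (Fin.cons j v) : Polynomial ℚ)
        = ∑ v ∈ compositions k (m-j),
          (qNat r ^ j * Polynomial.X ^ j.choose 2 * (m.choose j : Polynomial ℚ)) *
            (chainQ j k v * Polynomial.X ^ (∑ i, (v i).choose 2) *
              (Nat.multinomial Finset.univ v : Polynomial ℚ)) := by
      intro k hk
      refine Finset.sum_congr rfl fun v hv => ?_
      rw [mem_compositions] at hv
      obtain ⟨hvs, hvpos⟩ := hv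
      rw [chainQ_cons, cons_choose_sum, multinomial_cons_fin]
      rw [hvs, show j + (m - j) = m by omega]
      push_cast
      ring
    rw [Finset.sum_congr rfl step1]
    simp_rw [← Finset.mul_sum]
    congr 1
    rw [Fexp]
    symm
    apply Finset.sum_subset
    · intro k hk
      rw [Finset.mem_Icc] at hk ⊢
      omega
    · intro k hk hk2
      rw [Finset.mem_Icc] at hk hk2
      rw [compositions_eq_empty (by omega), Finset.sum_empty]

lemma J_eq_Fexp : ∀ n r : ℕ, 1 ≤ r → r + 1 ≤ n → J n r = Fexp r (n - r) := by
  intro n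
  induction n using Nat.strong_induction_on with
  | _ n ih =>
  intro r hr hrn
  have hm : 1 ≤ n - r := by omega
  rw [J, dif_neg (by omega : ¬ r = 0), dif_neg (by omega : ¬ n ≤ r)]
  rw [Fexp_key r (n-r) hm]
  have hsplit : Finset.Icc 1 (n-r) = insert (n-r) (Finset.Icc 1 (n-r-1)) := by
    ext x; simp only [Finset.mem_Icc, Finset.mem_insert]; omega
  rw [hsplit, Finset.sum_insert (by rw [Finset.mem_Icc]; omega)]
  congr 1
  · rw [J, dif_neg (by omega : ¬ (n - r) = 0), dif_pos (le_refl (n-r)), if_pos rfl]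
    simp [Nat.choose_self]
  · refine Finset.sum_congr rfl fun j hj => ?_
    rw [Finset.mem_Icc] at hj
    rw [ih (n - r) (by omega) j hj.1 (by omega)]

/-- for `n − 1 ≥ r ≥ 1`,
`J_n^{(r)} = ∑_{k=1}^{n−r} ∑_{(u_1,…,u_k)} [r]_q^{u_1} [u_1]_q^{u_2} ⋯ [u_{k−1}]_q^{u_k}
q^{C(u_1,2)+⋯+C(u_k,2)} (n−r)!/(u_1!⋯u_k!)`, the inner sum being over the
compositions of `n − r` into `k` strictly positive parts. -/
theorem J_explicit_formula (n r : ℕ) (hr : 1 ≤ r) (hrn : r + 1 ≤ n) :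
    J n r =
      ∑ k ∈ Finset.Icc 1 (n - r), ∑ u ∈ compositions k (n - r),
        chainQ r k u * Polynomial.X ^ (∑ i, (u i).choose 2) *
          (Nat.multinomial Finset.univ u : Polynomial ℚ) := by
  rw [J_eq_Fexp n r hr hrn, Fexp]

end
end
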